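/- arXiv:2005.02059 — 11 statements merged into one kernel-verified Lean document; each statement's English description precedes it below -/
import Mathlib

section
/- An R-module M is Baer (i.e., for every subset X of End_R(M), the annihilator {m ∈ M : f(m) = 0 for all f ∈ X} is a direct summand of M) if and only if every short exact sequence 0 → X → M → Y → 0 of R-modules with Y cogenerated by M splits. -/
universe u v

/-- `M` is a Baer module: the common kernel of any set of endomorphisms
is a direct summand of `M`. -/
def IsBaerModule (R : Type u) [Ring R] (M : Type v) [AddCommGroup M]
    [Module R M] : Prop :=
  ∀ X : Set (Module.End R M), ∃ p : Submodule R M,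
    IsCompl (⨅ f ∈ X, LinearMap.ker f) p

/-- `Y` is cogenerated by `M`: `Y` embeds in a direct product of copies of `M`. -/
def CogeneratedBy (R : Type u) [Ring R] (M : Type v) [AddCommGroup M] [Module R M]
    (Y : Type v) [AddCommGroup Y] [Module R Y] : Prop :=
  ∃ (ι : Type v) (f : Y →ₗ[R] (ι → M)), Function.Injective f

theorem stmt0 (R : Type u) [Ring R] (M : Type v) [AddCommGroup M] [Module R M] :
    IsBaerModule R M ↔
      ∀ (X Y : Type v) [AddCommGroup X] [Module R X] [AddCommGroup Y] [Module R Y]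
        (i : X →ₗ[R] M) (g : M →ₗ[R] Y),
        Function.Injective i → Function.Surjective g →
        LinearMap.range i = LinearMap.ker g →
        CogeneratedBy R M Y →
        ∃ h : Y →ₗ[R] M, g.comp h = LinearMap.id := by
  constructor
  · -- Baer ⇒ splitting
    intro hB X Y _ _ _ _ i g hi hg hrange hcog
    obtain ⟨ι, f, hf⟩ := hcog
    -- the family of endomorphisms: project f ∘ g to each coordinate
    set S : Set (Module.End R M) :=
      Set.range (fun k : ι => (LinearMap.proj k).comp (f.comp g)) with hS
    have hker : (⨅ e ∈ S, LinearMap.ker e) = LinearMap.ker g := by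
      ext m
      simp only [Submodule.mem_iInf, LinearMap.mem_ker, hS, Set.forall_mem_range,
        LinearMap.comp_apply, LinearMap.proj_apply]
      constructor
      · intro h
        have : f (g m) = 0 := funext h
        have := hf (by rw [this, map_zero] : f (g m) = f 0)
        exact this
      · intro h k
        rw [h, map_zero]; rfl
    obtain ⟨p, hp⟩ := hB S
    rw [hker] at hp
    -- g restricted to p is bijective onto Y
    have hinj : Function.Injective (g.comp p.subtype) := by
      rintro ⟨a, ha⟩ ⟨b, hb⟩ hab
      simp only [LinearMap.comp_apply, Submodule.coe_subtype] at hab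
      have hmem : a - b ∈ LinearMap.ker g ⊓ p :=
        ⟨by simp [LinearMap.mem_ker, map_sub, hab], sub_mem ha hb⟩
      rw [hp.inf_eq_bot] at hmem
      exact Subtype.ext (sub_eq_zero.mp hmem)
    have hsurj : Function.Surjective (g.comp p.subtype) := by
      intro y
      obtain ⟨m, hm⟩ := hg y
      have hmem : m ∈ LinearMap.ker g ⊔ p := by rw [hp.sup_eq_top]; trivial
      obtain ⟨a, ha, b, hb, hab⟩ := Submodule.mem_sup.mp hmem
      refine ⟨⟨b, hb⟩, ?_⟩
      simp only [LinearMap.comp_apply, Submodule.coe_subtype]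
      have : g m = g a + g b := by rw [← map_add, hab]
      rw [LinearMap.mem_ker.mp ha, zero_add] at this
      rw [← this, hm]
    let e : p ≃ₗ[R] Y := LinearEquiv.ofBijective (g.comp p.subtype) ⟨hinj, hsurj⟩
    refine ⟨p.subtype.comp (e.symm : Y →ₗ[R] p), ?_⟩
    ext y
    have h1 : (g.comp p.subtype) (e.symm y) = y := by
      exact e.apply_symm_apply y
    exact h1
  · -- splitting ⇒ Baer
    intro hsplit X
    set K : Submodule R M := ⨅ f ∈ X, LinearMap.ker f with hK
    -- embed M/K into X → M
    let φ : M →ₗ[R] (X → M) := LinearMap.pi (fun x : X => (x : Module.End R M))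
    have hle : K ≤ LinearMap.ker φ := by
      intro m hm
      simp only [LinearMap.mem_ker, φ]
      ext x
      have := (Submodule.mem_iInf _).mp hm x
      have := (Submodule.mem_iInf _).mp this x.2
      exact this
    let F : (M ⧸ K) →ₗ[R] (X → M) := Submodule.liftQ K φ hle
    have hFinj : Function.Injective F := by
      rw [← LinearMap.ker_eq_bot]
      rw [Submodule.ker_liftQ_eq_bot]
      intro m hm
      simp only [LinearMap.mem_ker, φ] at hm
      rw [hK]
      refine (Submodule.mem_iInf _).mpr fun f => (Submodule.mem_iInf _).mpr fun hf => ?_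
      exact congrFun hm ⟨f, hf⟩
    obtain ⟨h, hh⟩ := hsplit K (M ⧸ K) K.subtype K.mkQ K.injective_subtype
      (Submodule.mkQ_surjective K)
      (by rw [Submodule.range_subtype, Submodule.ker_mkQ]) ⟨X, F, hFinj⟩
    have hgh : ∀ y, K.mkQ (h y) = y := fun y => congrFun (congrArg DFunLike.coe hh) y
    refine ⟨LinearMap.range h, ?_⟩
    constructor
    · rw [disjoint_iff, eq_bot_iff]
      rintro m ⟨hm1, y, rfl⟩
      have h0 : K.mkQ (h y) = 0 := by
        simpa using (Submodule.Quotient.mk_eq_zero K).mpr hm1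
      rw [hgh] at h0
      simp [h0]
    · rw [codisjoint_iff, eq_top_iff]
      intro m _
      have hmem : m - h (K.mkQ m) ∈ K := by
        have h0 : K.mkQ (m - h (K.mkQ m)) = 0 := by rw [map_sub, hgh, sub_self]
        simpa using (Submodule.Quotient.mk_eq_zero K).mp (by simpa using h0)
      refine Submodule.mem_sup.mpr ⟨m - h (K.mkQ m), hmem, h (K.mkQ m), ⟨_, rfl⟩, by abel⟩
end

section
/- An R-module M is dual Baer (i.e., for every submodule N ≤ M, the right ideal Hom_R(M,N) of End_R(M) is generated by an idempotent) if and only if every short exact sequence 0 → X → M → Y → 0 of R-modules with X generated by M splits. -/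
universe u v

/-- `M` is a dual Baer module: for every submodule `N` of `M`, the right ideal
`Hom_R(M,N)` of `End_R(M)` is generated by an idempotent. -/
def IsDualBaerModule (R : Type u) [Ring R] (M : Type v) [AddCommGroup M]
    [Module R M] : Prop :=
  ∀ N : Submodule R M, ∃ e : Module.End R M, IsIdempotentElem e ∧
    {f : Module.End R M | LinearMap.range f ≤ N} = Set.range fun s => e * s

/-- `X` is generated by `M`: `X` is a homomorphic image of a direct sum of copies of `M`. -/
def GeneratedBy (R : Type u) [Ring R] (M : Type v) [AddCommGroup M] [Module R M]
    (X : Type v) [AddCommGroup X] [Module R X] : Prop :=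
  ∃ (ι : Type v) (f : (ι →₀ M) →ₗ[R] X), Function.Surjective f

/-! `Hom(M, N) = e End(M)` for an idempotent `e` says exactly that the trace of `M` in `N`, the
largest `M`-generated submodule of `N`, is the range of the idempotent `e`, i.e. a direct summand
of `M`. A surjection `M → Y` splits iff its kernel is such a summand, and an `M`-generated kernel
is its own trace; conversely the sequence `0 → Tr(M, N) → M → M / Tr(M, N) → 0` has an
`M`-generated kernel. -/

open LinearMap

theorem Finsupp.range_eq_iSup_range_comp_lsingle {R M X ι : Type*} [Semiring R]
    [AddCommMonoid M] [Module R M] [AddCommMonoid X] [Module R X] (φ : (ι →₀ M) →ₗ[R] X) :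
    range φ = ⨆ a, range (φ ∘ₗ lsingle a) := by
  simp_rw [range_comp, ← Submodule.map_iSup, Finsupp.iSup_lsingle_range, Submodule.map_top]

namespace Submodule

variable {R : Type u} [Ring R] {M : Type v} [AddCommGroup M] [Module R M]

/-- The trace `Tr(M, N)` of `M` in `N`, the maps `M → N` being the endomorphisms of `M` with
range in `N`. -/
def trace (N : Submodule R M) : Submodule R M :=
  ⨆ f : {f : Module.End R M // range f ≤ N}, range f.1

theorem trace_le (N : Submodule R M) : N.trace ≤ N :=
  iSup_le fun f => f.2

theorem range_le_trace_iff {N : Submodule R M} {f : Module.End R M} :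
    range f ≤ N.trace ↔ range f ≤ N :=
  ⟨fun h => h.trans N.trace_le, fun h => le_iSup (fun f : {f // range f ≤ N} => range f.1) ⟨f, h⟩⟩

theorem trace_range_of_generatedBy {X : Type v} [AddCommGroup X] [Module R X]
    (hX : GeneratedBy R M X) (i : X →ₗ[R] M) : (range i).trace = range i := by
  refine le_antisymm (trace_le _) ?_
  obtain ⟨ι, φ, hφ⟩ := hX
  conv_lhs => rw [← range_comp_of_range_eq_top i (range_eq_top.mpr hφ),
    Finsupp.range_eq_iSup_range_comp_lsingle]
  exact iSup_le fun a => range_le_trace_iff.mpr <|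
    (range_comp_le_range _ _).trans (range_comp_le_range _ _)

theorem generatedBy_trace (N : Submodule R M) : GeneratedBy R M N.trace := by
  let F := Finsupp.lsum ℕ fun f : {f : Module.End R M // range f ≤ N} => f.1
  have hF : range F = N.trace := by
    simp_rw [Finsupp.range_eq_iSup_range_comp_lsingle, F, Finsupp.lsum_comp_lsingle, trace]
  refine ⟨_, (LinearEquiv.ofEq _ _ hF).toLinearMap ∘ₗ F.rangeRestrict, ?_⟩
  rw [coe_comp]
  exact (LinearEquiv.surjective _).comp F.surjective_rangeRestrict

theorem setOf_range_le_eq_iff_trace_eq (N : Submodule R M) (e : Module.End R M) :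
    {f : Module.End R M | range f ≤ N} = {f | range f ≤ range e} ↔ N.trace = range e := by
  constructor
  · intro h
    have hmem (f : Module.End R M) : range f ≤ N ↔ range f ≤ range e := Set.ext_iff.mp h f
    exact le_antisymm (iSup_le fun f => (hmem f.1).mp f.2)
      (range_le_trace_iff.mpr ((hmem e).mpr le_rfl))
  · intro h
    ext f
    simp only [Set.mem_ofPred_eq, ← h, range_le_trace_iff]

end Submodule

theorem IsIdempotentElem.range_mul_eq_setOf_range_le {R M : Type*} [Semiring R]
    [AddCommMonoid M] [Module R M] {e : Module.End R M} (he : IsIdempotentElem e) :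
    Set.range (e * ·) = {f | range f ≤ range e} := by
  ext f
  rw [Set.mem_ofPred_eq, ← he.comp_eq_right_iff, ← Module.End.mul_eq_comp]
  exact ⟨fun ⟨s, hs⟩ => hs ▸ by rw [← mul_assoc, he.eq], fun h => ⟨f, h⟩⟩

theorem isDualBaerModule_iff_exists_isIdempotentElem_trace_eq_range (R : Type u) [Ring R] (M : Type v)
    [AddCommGroup M] [Module R M] :
    IsDualBaerModule R M ↔
      ∀ N : Submodule R M, ∃ e : Module.End R M, IsIdempotentElem e ∧ N.trace = range e := by
  refine forall_congr' fun N => exists_congr fun e => and_congr_right fun he => ?_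
  rw [he.range_mul_eq_setOf_range_le, N.setOf_range_le_eq_iff_trace_eq]

theorem exists_rightInverse_iff_exists_isIdempotentElem_range_eq_ker {R : Type*} [Ring R]
    {M Y : Type*} [AddCommGroup M] [Module R M] [AddCommGroup Y] [Module R Y]
    {g : M →ₗ[R] Y} (hg : Function.Surjective g) :
    (∃ h : Y →ₗ[R] M, g ∘ₗ h = LinearMap.id) ↔
      ∃ e : Module.End R M, IsIdempotentElem e ∧ range e = ker g := by
  constructor
  · rintro ⟨h, hgh⟩
    have hp : IsIdempotentElem (h ∘ₗ g) := by
      rw [IsIdempotentElem, Module.End.mul_eq_comp, comp_assoc, ← comp_assoc g, hgh, id_comp]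
    refine ⟨1 - h ∘ₗ g, hp.one_sub, ?_⟩
    rw [← hp.ker_eq_range_one_sub, ker_comp, ker_eq_bot_of_inverse hgh, Submodule.comap_bot]
  · rintro ⟨e, he, hre⟩
    let q := (ker g).liftQ (1 - e) (hre ▸ he.range_eq_ker_one_sub.le)
    refine ⟨q ∘ₗ (g.quotKerEquivOfSurjective hg).symm.toLinearMap, ext fun y => ?_⟩
    obtain ⟨x, rfl⟩ := hg y
    have hex : g (e x) = 0 := mem_ker.mp (hre ▸ mem_range_self e x)
    simp [q, quotKerEquivOfSurjective_symm_apply, hex]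

theorem stmt1 (R : Type u) [Ring R] (M : Type v) [AddCommGroup M] [Module R M] :
    IsDualBaerModule R M ↔
      ∀ (X Y : Type v) [AddCommGroup X] [Module R X] [AddCommGroup Y] [Module R Y]
        (i : X →ₗ[R] M) (g : M →ₗ[R] Y),
        Function.Injective i → Function.Surjective g →
        LinearMap.range i = LinearMap.ker g →
        GeneratedBy R M X →
        ∃ h : Y →ₗ[R] M, g.comp h = LinearMap.id := by
  rw [isDualBaerModule_iff_exists_isIdempotentElem_trace_eq_range]
  constructor
  · intro hdb X Y _ _ _ _ i g _ hg hexact hX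
    obtain ⟨e, he, hrange⟩ := hdb (range i)
    rw [Submodule.trace_range_of_generatedBy hX, hexact] at hrange
    exact (exists_rightInverse_iff_exists_isIdempotentElem_range_eq_ker hg).mpr
      ⟨e, he, hrange.symm⟩
  · intro hsplit N
    have hexact : range N.trace.subtype = ker N.trace.mkQ := by
      rw [Submodule.range_subtype, Submodule.ker_mkQ]
    obtain ⟨e, he, hrange⟩ := (exists_rightInverse_iff_exists_isIdempotentElem_range_eq_ker
      N.trace.mkQ_surjective).mp <| hsplit _ _ N.trace.subtype N.trace.mkQ
        N.trace.injective_subtype N.trace.mkQ_surjective hexact N.generatedBy_trace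
    exact ⟨e, he, (hrange.trans N.trace.ker_mkQ).symm⟩
end

section
/- A nonzero R-module M is dual Baer if and only if IM is a direct summand of M for every right ideal I of S = End_R(M). -/
/-!
Write `Hom(M, N)` for the right ideal of endomorphisms with image in `N` and `IM` for the
submodule generated by the images of the elements of a right ideal `I`. The maps `I ↦ IM` and
`N ↦ Hom(M, N)` form a Galois connection, and for an idempotent `e` the principal right ideal
`eS` is `Hom(M, eM)`. So `M` is dual Baer iff every `Hom(M, N)` equals some `Hom(M, eM)`, while
`IM` is a summand iff it equals some `eM`; the Galois identities `I ≤ Hom(M, IM)` and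
`Hom(M, Hom(M, N)M) = Hom(M, N)` translate one condition into the other.
-/

universe u v

namespace Module.End

variable {R : Type*} [Ring R] {M : Type*} [AddCommGroup M] [Module R M]

def homInto (N : Submodule R M) : Submodule (Module.End R M)ᵐᵒᵖ (Module.End R M) where
  carrier := {f | LinearMap.range f ≤ N}
  add_mem' {f g} hf hg := by
    rintro _ ⟨x, rfl⟩
    exact N.add_mem (hf ⟨x, rfl⟩) (hg ⟨x, rfl⟩)
  zero_mem' := by simp
  smul_mem' c f hf := (LinearMap.range_comp_le_range c.unop f).trans hf

theorem mem_homInto {N : Submodule R M} {f : Module.End R M} :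
    f ∈ homInto N ↔ LinearMap.range f ≤ N :=
  Iff.rfl

def imageSum (I : Submodule (Module.End R M)ᵐᵒᵖ (Module.End R M)) : Submodule R M :=
  ⨆ f ∈ (I : Set (Module.End R M)), LinearMap.range f

theorem gc_imageSum_homInto :
    GaloisConnection (imageSum (R := R) (M := M)) homInto := fun _ _ => iSup₂_le_iff

theorem _root_.IsIdempotentElem.range_mul_left_eq_homInto {e : Module.End R M}
    (he : IsIdempotentElem e) :
    Set.range (fun s => e * s) = (homInto (LinearMap.range e) : Set (Module.End R M)) := by
  ext f
  constructor
  · rintro ⟨s, rfl⟩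
    exact LinearMap.range_comp_le_range s e
  · exact fun hf => ⟨f, (LinearMap.IsIdempotentElem.comp_eq_right_iff he f).2 hf⟩

theorem isDualBaerModule_iff_exists_homInto_eq :
    IsDualBaerModule R M ↔ ∀ N : Submodule R M,
      ∃ e : Module.End R M, IsIdempotentElem e ∧ homInto N = homInto (LinearMap.range e) := by
  refine forall_congr' fun N => exists_congr fun e => and_congr_right fun he => ?_
  rw [he.range_mul_left_eq_homInto]
  exact SetLike.coe_set_eq (p := homInto N)

theorem exists_isCompl_iff_exists_isIdempotentElem_range_eq {K : Submodule R M} :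
    (∃ p : Submodule R M, IsCompl K p) ↔
      ∃ e : Module.End R M, IsIdempotentElem e ∧ LinearMap.range e = K := by
  constructor
  · rintro ⟨p, hp⟩
    exact ⟨K.projection p hp, Submodule.isIdempotentElem_projection hp,
      Submodule.range_projection hp⟩
  · rintro ⟨e, he, rfl⟩
    exact ⟨LinearMap.ker e, LinearMap.IsIdempotentElem.isCompl he⟩

end Module.End

open Module.End in
theorem stmt4_general (R : Type u) [Ring R] (M : Type v) [AddCommGroup M] [Module R M] :
    IsDualBaerModule R M ↔
      ∀ I : Submodule (Module.End R M)ᵐᵒᵖ (Module.End R M), ∃ p : Submodule R M,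
        IsCompl (⨆ f ∈ (I : Set (Module.End R M)), LinearMap.range f) p := by
  change _ ↔ ∀ I, ∃ p, IsCompl (imageSum I) p
  simp only [isDualBaerModule_iff_exists_homInto_eq,
    exists_isCompl_iff_exists_isIdempotentElem_range_eq]
  have gc := gc_imageSum_homInto (R := R) (M := M)
  constructor
  · intro h I
    obtain ⟨e, he, hIe⟩ := h (imageSum I)
    have range_le : LinearMap.range e ≤ imageSum I :=
      mem_homInto.1 (hIe ▸ mem_homInto.2 le_rfl)
    have le_range : imageSum I ≤ LinearMap.range e := gc.l_le (hIe ▸ gc.le_u_l I)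
    exact ⟨e, he, le_antisymm range_le le_range⟩
  · intro h N
    obtain ⟨e, he, hNe⟩ := h (homInto N)
    exact ⟨e, he, by rw [hNe, gc.u_l_u_eq_u]⟩

theorem stmt4 (R : Type u) [Ring R] (M : Type v) [AddCommGroup M] [Module R M]
    [Nontrivial M] :
    IsDualBaerModule R M ↔
      ∀ I : Submodule (Module.End R M)ᵐᵒᵖ (Module.End R M), ∃ p : Submodule R M,
        IsCompl (⨆ f ∈ (I : Set (Module.End R M)), LinearMap.range f) p :=
  stmt4_general R M
end

section
/- If R is a Baer ring and P is a projective right R-module, then the annihilator ideal ann_R(P) is a direct summand of R as a right R-module. -/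
universe u v

/-- `R` is a Baer ring: the right annihilator of any nonempty subset of `R`
equals `eR` for some idempotent `e`. -/
def IsBaerRing (R : Type u) [Ring R] : Prop :=
  ∀ X : Set R, X.Nonempty → ∃ e : R, IsIdempotentElem e ∧
    {r : R | ∀ x ∈ X, x * r = 0} = {y : R | ∃ s : R, y = e * s}

theorem stmt5 (R : Type u) [Ring R] (hR : IsBaerRing R)
    (P : Type v) [AddCommGroup P] [Module Rᵐᵒᵖ P] [Module.Projective Rᵐᵒᵖ P] :
    ∃ e : R, IsIdempotentElem e ∧
      {r : R | ∀ p : P, (MulOpposite.op r) • p = 0} = {y : R | ∃ s : R, y = e * s} := by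
  classical
  obtain ⟨s, hs⟩ := (Module.projective_def.mp ‹Module.Projective Rᵐᵒᵖ P›)
  set X : Set R := {x : R | ∃ f : P →ₗ[Rᵐᵒᵖ] Rᵐᵒᵖ, ∃ p : P, f p = MulOpposite.op x} with hX
  have hXne : X.Nonempty := ⟨0, 0, 0, by simp⟩
  obtain ⟨e, he, hset⟩ := hR X hXne
  refine ⟨e, he, ?_⟩
  rw [← hset]
  ext r
  simp only [Set.mem_setOf_eq]
  constructor
  · intro hr x hx
    obtain ⟨f, p, hfp⟩ := hx
    have : f ((MulOpposite.op r) • p) = 0 := by rw [hr p, map_zero]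
    rw [map_smul, hfp] at this
    have : MulOpposite.op (x * r) = 0 := by
      rw [← this]; rfl
    exact MulOpposite.op_injective (by simpa using this)
  · intro hr p
    have key : s ((MulOpposite.op r) • p) = 0 := by
      rw [map_smul]
      ext q
      have hx : (s p q).unop ∈ X :=
        ⟨(Finsupp.lapply q).comp s, p, by simp⟩
      have := hr _ hx
      show (MulOpposite.op r) • (s p q) = 0
      rw [smul_eq_mul]
      calc MulOpposite.op r * s p q = MulOpposite.op ((s p q).unop * r) := by
            rw [MulOpposite.op_mul]; simp
        _ = 0 := by rw [this, MulOpposite.op_zero]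
    have := hs ((MulOpposite.op r) • p)
    rw [key, map_zero] at this
    exact this.symm
end

section
/- If R is a right hereditary right Noetherian ring, then every injective right R-module is dual Baer. -/
universe u v

/-!
Let `T ≤ N` be the trace of `M` in `N`, the sum of the images of all endomorphisms of `M` landing
in `N`. Every such endomorphism lands in `T`, so `Hom(M, N)` is generated by an idempotent as soon
as `T` is a direct summand of `M`, i.e. as soon as `T` satisfies Baer's criterion. Given a left
ideal `K` of the ring `S` and `g : K → T`: `K` is finitely generated, so `g(K)` lies in the image
of a finite power `Φ : Mⁿ → T`; `K` is projective, so `g` lifts through `Φ`; and the lift extends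
to all of `S` because `M` is injective.

Injectivity of `M` is only tested against modules in the universe of `M`, so the last extension is
done along `K/(A • K) ↪ S/(A • K)` for `A = ann M ≤ K`: these modules are small because `S/A`
embeds in `End(M)` and `A` is finitely generated. Restricting to ideals `K ≥ A` means running
Baer's criterion for `T` over `S ⧸ A`.
-/

open LinearMap Submodule

variable {S : Type u} [Ring S] {M : Type v} [AddCommGroup M] [Module S M]

theorem small_quotient_annihilator : Small.{v} (S ⧸ Module.annihilator S M) :=
  small_of_injective (RingHom.kerLift_injective (Module.toAddMonoidEnd S M))

theorem small_quotient_smul {A K : Ideal S} [Small.{v} (S ⧸ A)] (hA : A.FG) (hAK : A ≤ K) :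
    Small.{v} (S ⧸ A • K) := by
  obtain ⟨n, t, hAt⟩ := Submodule.fg_iff_exists_fin_generating_family.mp hA
  -- `r = r₀ + ∑ cᵢ tᵢ` with `r₀` determined by `r mod A`, and modulo `A • K` only the classes
  -- `cᵢ mod A` matter, since the generators `tᵢ` of `A` lie in `K`.
  refine small_of_surjective (f := fun p : (S ⧸ A) × (Fin n → S ⧸ A) =>
    Submodule.Quotient.mk (p.1.out + ∑ i, (p.2 i).out * t i)) ?_
  intro y
  obtain ⟨r, rfl⟩ := Submodule.Quotient.mk_surjective _ y
  have hout : ∀ s : S, (Submodule.Quotient.mk s : S ⧸ A).out - s ∈ A := fun s =>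
    (Submodule.Quotient.eq A).mp (Quotient.out_eq _)
  have hr : r - (Submodule.Quotient.mk r : S ⧸ A).out ∈ span S (Set.range t) := by
    rw [hAt, ← neg_sub]; exact A.neg_mem (hout r)
  obtain ⟨c, hc⟩ := (Submodule.mem_span_range_iff_exists_fun S).mp hr
  have ht : ∀ i, t i ∈ K := fun i => hAK (hAt ▸ subset_span ⟨i, rfl⟩)
  refine ⟨(Submodule.Quotient.mk r, fun i => Submodule.Quotient.mk (c i)),
    (Submodule.Quotient.eq _).mpr ?_⟩
  convert sum_mem fun i _ => smul_mem_smul (hout (c i)) (ht i) using 1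
  simp only [smul_eq_mul, sub_mul, Finset.sum_sub_distrib] at hc ⊢
  rw [hc]
  abel

theorem Module.Injective.exists_extension_of_small [Module.Injective S M] {X Y : Type*}
    [AddCommGroup X] [Module S X] [AddCommGroup Y] [Module S Y] [Small.{v} X] [Small.{v} Y]
    (f : X →ₗ[S] Y) (hf : Function.Injective f) (g : X →ₗ[S] M) :
    ∃ h : Y →ₗ[S] M, h ∘ₗ f = g := by
  let eX := Shrink.linearEquiv S X
  let eY := Shrink.linearEquiv S Y
  obtain ⟨h, hh⟩ := Module.Injective.out (eY.symm.toLinearMap ∘ₗ f ∘ₗ eX.toLinearMap)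
    (eY.symm.injective.comp (hf.comp eX.injective)) (g ∘ₗ eX.toLinearMap)
  exact ⟨h ∘ₗ eY.symm.toLinearMap, LinearMap.ext fun x => by simpa [eX] using hh (eX.symm x)⟩

theorem Module.Injective.exists_extension_of_annihilator_le [Module.Injective S M]
    (hA : (Module.annihilator S M).FG) {K : Ideal S} (hK : Module.annihilator S M ≤ K)
    (g : K →ₗ[S] M) : ∃ g' : S →ₗ[S] M, ∀ x : K, g' x = g x := by
  set A := Module.annihilator S M
  have := small_quotient_annihilator (S := S) (M := M)
  have := small_quotient_smul hA hK
  have hle : A • (⊤ : Submodule S K) ≤ Submodule.comap K.subtype (A • K) := fun x hx =>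
    (mem_smul_top_iff A K x).mp hx
  let f := (A • (⊤ : Submodule S K)).mapQ (A • K) K.subtype hle
  have hf : Function.Injective f := by
    rw [← LinearMap.ker_eq_bot, Submodule.ker_mapQ, eq_bot_iff, Submodule.map_le_iff_le_comap,
      ← LinearMap.ker, Submodule.ker_mkQ]
    exact fun x hx => (mem_smul_top_iff A K x).mpr hx
  have : Small.{v} (K ⧸ A • (⊤ : Submodule S K)) := small_of_injective hf
  have hg : A • (⊤ : Submodule S K) ≤ ker g := Submodule.smul_le.mpr fun a ha k _ => by
    simp [Module.mem_annihilator.mp ha]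
  obtain ⟨h, hh⟩ := Module.Injective.exists_extension_of_small f hf (Submodule.liftQ _ g hg)
  exact ⟨h ∘ₗ (A • K).mkQ, fun x => by simpa [f] using congr($hh (Submodule.Quotient.mk x))⟩

namespace Submodule

variable (N : Submodule S M)

def endTrace : Submodule S M :=
  ⨆ f : {f : Module.End S M // range f ≤ N}, range f.1

theorem endTrace_le : N.endTrace ≤ N :=
  iSup_le fun f => f.2

theorem range_le_endTrace {f : Module.End S M} (hf : range f ≤ N) : range f ≤ N.endTrace :=
  le_iSup (fun f : {f : Module.End S M // range f ≤ N} => range f.1) ⟨f, hf⟩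

theorem exists_linearMap_pi_of_fg_le_endTrace {P : Submodule S M} (hP : P.FG)
    (hPN : P ≤ N.endTrace) :
    ∃ (ι : Type v) (_ : Fintype ι) (Φ : (ι → M) →ₗ[S] M), P ≤ range Φ ∧ range Φ ≤ N.endTrace := by
  obtain ⟨s, hs⟩ := CompleteLattice.IsCompactElement.exists_finset_of_le_iSup _
    ((fg_iff_compact P).mp hP) _ hPN
  refine ⟨s, inferInstance, ∑ i : s, (i : {f : Module.End S M // range f ≤ N}).1 ∘ₗ proj i,
    hs.trans (iSup₂_le fun f hf => ?_), ?_⟩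
  · classical
    rintro _ ⟨m, rfl⟩
    refine ⟨Pi.single ⟨f, hf⟩ m, ?_⟩
    rw [LinearMap.sum_apply, Fintype.sum_eq_single ⟨f, hf⟩ fun i hi => by simp [hi]]
    simp
  · rintro _ ⟨v, rfl⟩
    rw [LinearMap.sum_apply]
    exact sum_mem fun i _ => N.range_le_endTrace i.1.2 ⟨v i, rfl⟩

theorem exists_smul_eq_of_range_le_endTrace
    (hher : ∀ K : Ideal S, Module.Projective S K) [IsNoetherian S S] [Module.Injective S M]
    {K : Ideal S} (hK : Module.annihilator S M ≤ K) (g : K →ₗ[S] M) (hg : range g ≤ N.endTrace) :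
    ∃ q ∈ N.endTrace, ∀ x : K, (x : S) • q = g x := by
  have hgfg : (range g).FG := range_eq_map g ▸ (IsNoetherian.noetherian _).map g
  obtain ⟨ι, _, Φ, hgΦ, hΦ⟩ := N.exists_linearMap_pi_of_fg_le_endTrace hgfg hg
  have := hher K
  obtain ⟨h, hh⟩ := Module.projective_lifting_property Φ.rangeRestrict
    (g.codRestrict (range Φ) fun x => hgΦ ⟨x, rfl⟩) Φ.surjective_rangeRestrict
  choose H hH using fun i => Module.Injective.exists_extension_of_annihilator_le
    (IsNoetherian.noetherian _) hK (proj i ∘ₗ h)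
  refine ⟨Φ fun i => H i 1, hΦ ⟨_, rfl⟩, fun x => ?_⟩
  calc (x : S) • Φ (fun i => H i 1) = Φ (fun i => H i x) := by
        rw [← map_smul]; congr 1; ext i; simp [← map_smul]
    _ = Φ (h x) := by congr 1; ext i; exact hH i x
    _ = g x := congr($hh x)

theorem exists_retraction_of_baer_above_annihilator (P : Submodule S M)
    (hP : ∀ K : Ideal S, Module.annihilator S M ≤ K → ∀ g : K →ₗ[S] M, range g ≤ P →
      ∃ q ∈ P, ∀ x : K, (x : S) • q = g x) :
    ∃ e : Module.End S M, range e ≤ P ∧ ∀ x ∈ P, e x = x := by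
  set A := Module.annihilator S M
  let : Module (S ⧸ A) M := Module.quotientAnnihilator
  -- Ideals of `S ⧸ A` are the ideals of `S` above `A`, so over `S ⧸ A` the hypothesis on `P`
  -- becomes Baer's criterion, and Zorn's lemma extends `id : P → P` along `P ≤ M`.
  let P' : Submodule (S ⧸ A) M :=
    { P.toAddSubmonoid with smul_mem' := by rintro ⟨c⟩ x hx; exact P.smul_mem c hx }
  have hbaer : Module.Baer (S ⧸ A) P' := by
    intro J g
    let gS : J.comap (Ideal.Quotient.mk A) →ₗ[S] M :=
      { toFun := fun x => g ⟨Ideal.Quotient.mk A x, x.2⟩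
        map_add' := fun x y => by
          rw [← Submodule.coe_add, ← map_add]
          congr 2
        map_smul' := fun s x => by
          change _ = ((Ideal.Quotient.mk A s • g ⟨Ideal.Quotient.mk A x, x.2⟩ : P') : M)
          rw [← map_smul]
          congr 2 }
    obtain ⟨q, hqP, hq⟩ := hP _ (fun a ha => by simp [Ideal.Quotient.eq_zero_iff_mem.mpr ha])
      gS (by rintro _ ⟨x, rfl⟩; exact (g _).2)
    refine ⟨toSpanSingleton _ _ ⟨q, hqP⟩, fun x hx => ?_⟩
    obtain ⟨x, rfl⟩ := Ideal.Quotient.mk_surjective x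
    exact Subtype.ext (hq ⟨x, hx⟩)
  obtain ⟨π, hπ⟩ := hbaer.extension_property P'.subtype Subtype.val_injective LinearMap.id
  refine ⟨{ toFun := fun m => π m, map_add' := by simp, map_smul' := fun s m => ?_ }, ?_, ?_⟩
  · exact congr(Subtype.val $(π.map_smul (Ideal.Quotient.mk A s) m))
  · rintro _ ⟨m, rfl⟩; exact (π m).2
  · intro x hx; exact congr(Subtype.val $(LinearMap.congr_fun hπ ⟨x, hx⟩))

end Submodule

theorem isDualBaerModule_of_exists_retraction (h : ∀ N : Submodule S M,
      ∃ e : Module.End S M, range e ≤ N.endTrace ∧ ∀ x ∈ N.endTrace, e x = x) :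
    IsDualBaerModule S M := by
  intro N
  obtain ⟨e, he, hfix⟩ := h N
  refine ⟨e, LinearMap.ext fun x => hfix _ (he ⟨x, rfl⟩), Set.ext fun f => ⟨fun hf => ?_, ?_⟩⟩
  · exact ⟨f, LinearMap.ext fun x => hfix _ (N.range_le_endTrace hf ⟨x, rfl⟩)⟩
  · rintro ⟨s, rfl⟩
    exact ((range_comp_le_range s e).trans he).trans N.endTrace_le

theorem Module.Injective.isDualBaerModule (hher : ∀ K : Ideal S, Module.Projective S K)
    [IsNoetherian S S] [Module.Injective S M] : IsDualBaerModule S M :=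
  isDualBaerModule_of_exists_retraction fun N =>
    N.endTrace.exists_retraction_of_baer_above_annihilator fun _ hK g hg =>
      N.exists_smul_eq_of_range_le_endTrace hher hK g hg

/-- Over a right hereditary right Noetherian ring, every injective right module is
dual Baer.  Right `R`-modules are `Rᵐᵒᵖ`-modules. -/
theorem stmt6 (R : Type u) [Ring R]
    (hher : ∀ I : Submodule Rᵐᵒᵖ R, Module.Projective Rᵐᵒᵖ I)
    (hnoeth : IsNoetherian Rᵐᵒᵖ R)
    (M : Type v) [AddCommGroup M] [Module Rᵐᵒᵖ M] [Module.Injective Rᵐᵒᵖ M] :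
    IsDualBaerModule Rᵐᵒᵖ M := by
  let e : R ≃ₗ[Rᵐᵒᵖ] Rᵐᵒᵖ := MulOpposite.opLinearEquiv Rᵐᵒᵖ
  have : IsNoetherian Rᵐᵒᵖ Rᵐᵒᵖ := isNoetherian_of_linearEquiv e
  refine Module.Injective.isDualBaerModule fun K => ?_
  have := hher (Submodule.map e.symm.toLinearMap K)
  exact Module.Projective.of_equiv (e.symm.submoduleMap K).symm
end

section
/- A ring R is Baer if and only if every cyclic torsionless right R-module is projective. -/
universe u

/-- `R` with its right-module structure over itself is `Rᵐᵒᵖ`-linearly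
equivalent to `Rᵐᵒᵖ` via `op`. -/
noncomputable def BaerAux.opEquiv (R : Type u) [Ring R] : R ≃ₗ[Rᵐᵒᵖ] Rᵐᵒᵖ :=
  { MulOpposite.opAddEquiv with
    map_smul' := fun a r => by simp [MulOpposite.op_mul] }

instance BaerAux.projR (R : Type u) [Ring R] : Module.Projective Rᵐᵒᵖ R :=
  Module.Projective.of_equiv (BaerAux.opEquiv R).symm

namespace BaerAux

variable {R : Type u} [Ring R]

/-- Left multiplication by `c` as an `Rᵐᵒᵖ`-linear endomorphism of `R`. -/
def lmul (c : R) : R →ₗ[Rᵐᵒᵖ] R where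
  toFun r := c * r
  map_add' := mul_add c
  map_smul' a r := by
    show c * (r * a.unop) = (c * r) * a.unop
    rw [mul_assoc]

@[simp] lemma lmul_apply (c r : R) : lmul c r = c * r := rfl

variable {M : Type u} [AddCommGroup M] [Module Rᵐᵒᵖ M]

/-- `r ↦ (op r) • m` as an `Rᵐᵒᵖ`-linear map. -/
def toCyc (m : M) : R →ₗ[Rᵐᵒᵖ] M where
  toFun r := (MulOpposite.op r) • m
  map_add' r s := by
    show (MulOpposite.op (r + s)) • m = _
    rw [MulOpposite.op_add, add_smul]
  map_smul' a r := by
    show (MulOpposite.op (r * a.unop)) • m = a • (MulOpposite.op r) • m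
    rw [MulOpposite.op_mul, mul_smul, MulOpposite.op_unop]

theorem fwd (hB : IsBaerRing R) (m : M) (hm : Submodule.span Rᵐᵒᵖ {m} = ⊤)
    (ι : Type u) (f : M →ₗ[Rᵐᵒᵖ] (ι → R)) (hf : Function.Injective f) :
    Module.Projective Rᵐᵒᵖ M := by
  set φ : R →ₗ[Rᵐᵒᵖ] M := toCyc m with hφ
  have hsurj : Function.Surjective φ := by
    intro x
    have hx : x ∈ Submodule.span Rᵐᵒᵖ {m} := hm ▸ Submodule.mem_top
    obtain ⟨a, ha⟩ := Submodule.mem_span_singleton.mp hx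
    exact ⟨a.unop, by simpa [hφ, toCyc] using ha⟩
  obtain ⟨e, he, hann⟩ := hB (insert 0 (Set.range fun i => f m i)) ⟨0, Set.mem_insert _ _⟩
  -- characterize the kernel of φ
  have hker : ∀ r : R, φ r = 0 ↔ ∃ s : R, r = e * s := by
    intro r
    have h1 : φ r = 0 ↔ ∀ i, f m i * r = 0 := by
      constructor
      · intro h i
        have : f (φ r) = 0 := by rw [h, map_zero]
        have h2 : (MulOpposite.op r) • (f m) = 0 := by
          rw [← map_smul]; exact this
        have := congrFun h2 i
        simpa using this
      · intro h
        apply hf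
        rw [map_zero]
        show f ((MulOpposite.op r) • m) = 0
        rw [map_smul]
        funext i
        show f m i * r = 0
        exact h i
    have h2 : (∀ i, f m i * r = 0) ↔
        r ∈ {r : R | ∀ x ∈ insert 0 (Set.range fun i => f m i), x * r = 0} := by
      constructor
      · rintro h x (rfl | ⟨i, rfl⟩)
        · exact zero_mul r
        · exact h i
      · intro h i
        exact h _ (Set.mem_insert_iff.mpr (Or.inr ⟨i, rfl⟩))
    rw [h1, h2, hann]
    exact Iff.rfl
  have hle : LinearMap.ker φ ≤ LinearMap.ker (lmul (1 - e)) := by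
    intro r hr
    obtain ⟨s, rfl⟩ := (hker r).mp hr
    simp only [LinearMap.mem_ker, lmul_apply]
    rw [sub_mul, one_mul, ← mul_assoc, he.eq, sub_self]
  have hproj : Module.Projective Rᵐᵒᵖ (R ⧸ LinearMap.ker φ) := by
    refine Module.Projective.of_split ((LinearMap.ker φ).liftQ (lmul (1 - e)) hle)
      (LinearMap.ker φ).mkQ ?_
    apply Submodule.linearMap_qext
    refine LinearMap.ext fun r => ?_
    show (LinearMap.ker φ).mkQ ((1 - e) * r) = (LinearMap.ker φ).mkQ r
    rw [sub_mul, one_mul, map_sub]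
    have : (LinearMap.ker φ).mkQ (e * r) = 0 := by
      rw [Submodule.mkQ_apply, Submodule.Quotient.mk_eq_zero]
      exact (hker (e * r)).mpr ⟨r, rfl⟩
    rw [this, sub_zero]
  exact Module.Projective.of_equiv (φ.quotKerEquivOfSurjective hsurj)

/-- The right annihilator of a subset, as a submodule of `R` over `Rᵐᵒᵖ`. -/
def rAnn (X : Set R) : Submodule Rᵐᵒᵖ R where
  carrier := {r | ∀ x ∈ X, x * r = 0}
  add_mem' := fun {a b} ha hb x hx => by rw [mul_add, ha x hx, hb x hx, add_zero]
  zero_mem' := fun x _ => mul_zero x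
  smul_mem' := fun a r hr x hx => by
    show x * (r * a.unop) = 0
    rw [← mul_assoc, hr x hx, zero_mul]

/-- `r ↦ (x * r)_{x ∈ X}` as an `Rᵐᵒᵖ`-linear map. -/
def annMap (X : Set R) : R →ₗ[Rᵐᵒᵖ] (X → R) where
  toFun r x := x.1 * r
  map_add' r s := by funext x; exact mul_add _ _ _
  map_smul' a r := by
    funext x
    show x.1 * (r * a.unop) = (x.1 * r) * a.unop
    rw [mul_assoc]

theorem bwd (h : ∀ (M : Type u) [AddCommGroup M] [Module Rᵐᵒᵖ M],
        (∃ m : M, Submodule.span Rᵐᵒᵖ {m} = ⊤) →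
        (∃ (ι : Type u) (f : M →ₗ[Rᵐᵒᵖ] (ι → R)), Function.Injective f) →
        Module.Projective Rᵐᵒᵖ M) : IsBaerRing R := by
  intro X _hX
  set I : Submodule Rᵐᵒᵖ R := rAnn X with hI
  have hmk : ∀ r : R, (MulOpposite.op r) • I.mkQ 1 = I.mkQ r := by
    intro r
    rw [← map_smul]
    congr 1
    show (1 : R) * r = r
    exact one_mul r
  -- cyclic
  have hcyc : ∃ m : R ⧸ I, Submodule.span Rᵐᵒᵖ {m} = ⊤ := by
    refine ⟨I.mkQ 1, eq_top_iff.mpr fun x _ => ?_⟩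
    obtain ⟨r, rfl⟩ := I.mkQ_surjective x
    exact Submodule.mem_span_singleton.mpr ⟨MulOpposite.op r, hmk r⟩
  -- torsionless
  have hle : I ≤ LinearMap.ker (annMap X) := by
    intro r hr
    funext x
    exact hr x.1 x.2
  have htor : ∃ (ι : Type u) (f : (R ⧸ I) →ₗ[Rᵐᵒᵖ] (ι → R)), Function.Injective f := by
    refine ⟨X, I.liftQ (annMap X) hle, ?_⟩
    rw [← LinearMap.ker_eq_bot]
    refine Submodule.ker_liftQ_eq_bot I _ hle fun r hr x hx => ?_
    exact congrFun hr ⟨x, hx⟩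
  have hproj := h (R ⧸ I) hcyc htor
  obtain ⟨s, hs⟩ := Module.projective_lifting_property I.mkQ
    (LinearMap.id : (R ⧸ I) →ₗ[Rᵐᵒᵖ] (R ⧸ I)) I.mkQ_surjective
  have hsa : ∀ x : R ⧸ I, I.mkQ (s x) = x := fun x => DFunLike.congr_fun hs x
  set c : R := s (I.mkQ 1) with hc
  have hsr : ∀ r : R, s (I.mkQ r) = c * r := by
    intro r
    rw [← hmk r, map_smul]
    rfl
  have hcc : c * c = c := by
    have h1 : I.mkQ c = I.mkQ 1 := hsa (I.mkQ 1)
    calc c * c = s (I.mkQ c) := (hsr c).symm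
    _ = s (I.mkQ 1) := by rw [h1]
    _ = c := rfl
  refine ⟨1 - c, ?_, ?_⟩
  · show (1 - c) * (1 - c) = 1 - c
    rw [sub_mul, one_mul, mul_sub, mul_one, hcc]
    abel
  · ext y
    constructor
    · intro hy
      have hyI : y ∈ I := hy
      have : I.mkQ y = 0 := (Submodule.Quotient.mk_eq_zero I).mpr hyI
      have hcy : c * y = 0 := by rw [← hsr y, this, map_zero]
      exact ⟨y, by rw [sub_mul, one_mul, hcy, sub_zero]⟩
    · rintro ⟨t, rfl⟩
      have : I.mkQ ((1 - c) * t) = 0 := by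
        rw [sub_mul, one_mul, map_sub, ← hsr t, hsa, sub_self]
      exact (Submodule.Quotient.mk_eq_zero I).mp this

end BaerAux

/-- A ring `R` is Baer iff every cyclic torsionless right `R`-module is projective.
Right `R`-modules are `Rᵐᵒᵖ`-modules. -/
theorem stmt7 (R : Type u) [Ring R] :
    IsBaerRing R ↔
      ∀ (M : Type u) [AddCommGroup M] [Module Rᵐᵒᵖ M],
        (∃ m : M, Submodule.span Rᵐᵒᵖ {m} = ⊤) →
        (∃ (ι : Type u) (f : M →ₗ[Rᵐᵒᵖ] (ι → R)), Function.Injective f) →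
        Module.Projective Rᵐᵒᵖ M := by
  constructor
  · rintro hB M _ _ ⟨m, hm⟩ ⟨ι, f, hf⟩
    exact BaerAux.fwd hB m hm ι f hf
  · exact BaerAux.bwd
end

section
/- Every direct summand of a Baer module is Baer, and every direct summand of a dual Baer module is dual Baer. -/
universe u v

/-!
A direct summand `N` of `M` is a retract: the inclusion `ι` followed by the projection `π` is the
identity of `N`. Both properties pass to retracts by compressing endomorphisms `f ↦ ι ∘ f ∘ π`.
The common kernel of the compressed endomorphisms is the preimage under `π` of the common kernel
in `N`, and compressing a projection of `M` onto that preimage gives a projection of `N` onto the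
common kernel. An idempotent `e` generating `Hom(M, ι L)` compresses to `π ∘ e ∘ ι`, which is again
idempotent (since `ι ∘ π` fixes the range of `e`) and generates `Hom(N, L)`.
-/

open LinearMap Submodule

section Idempotent

variable {R : Type*} [Ring R] {M : Type*} [AddCommGroup M] [Module R M]

theorem IsIdempotentElem.setOf_range_le_eq_range_mul_iff {e : Module.End R M}
    (he : IsIdempotentElem e) (N : Submodule R M) :
    {f : Module.End R M | range f ≤ N} = Set.range (e * ·) ↔
      range e ≤ N ∧ ∀ f : Module.End R M, range f ≤ N → e * f = f := by
  constructor
  · intro h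
    refine ⟨(h.symm ▸ ⟨1, mul_one e⟩ : e ∈ {f : Module.End R M | range f ≤ N}), ?_⟩
    intro f hf
    obtain ⟨s, rfl⟩ : f ∈ Set.range (e * ·) := h ▸ hf
    rw [← mul_assoc, he.eq]
  · rintro ⟨he_le, hfix⟩
    ext f
    refine ⟨fun hf => ⟨f, hfix f hf⟩, ?_⟩
    rintro ⟨s, rfl⟩
    exact (range_comp_le_range s e).trans he_le

theorem isDualBaerModule_iff :
    IsDualBaerModule R M ↔ ∀ N : Submodule R M, ∃ e : Module.End R M, IsIdempotentElem e ∧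
      range e ≤ N ∧ ∀ f : Module.End R M, range f ≤ N → e * f = f :=
  forall_congr' fun N => exists_congr fun _ =>
    and_congr_right fun he => he.setOf_range_le_eq_range_mul_iff N

end Idempotent

section Retraction

variable {R : Type*} [Ring R] {M N : Type*} [AddCommGroup M] [Module R M]
  [AddCommGroup N] [Module R N] {ι : N →ₗ[R] M} {π : M →ₗ[R] N}

theorem exists_isCompl_of_exists_isCompl_comap (hπι : π ∘ₗ ι = LinearMap.id) {K : Submodule R N}
    (hK : ∃ q : Submodule R M, IsCompl (K.comap π) q) : ∃ q : Submodule R N, IsCompl K q := by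
  obtain ⟨q, hq⟩ := hK
  let P := (K.comap π).projectionOnto q hq
  let f : N →ₗ[R] K := (π ∘ₗ (K.comap π).subtype ∘ₗ P ∘ₗ ι).codRestrict K fun n => (P (ι n)).2
  have hπι' (n : N) : π (ι n) = n := LinearMap.congr_fun hπι n
  refine ⟨ker f, isCompl_of_proj fun k => Subtype.ext ?_⟩
  have hk : ι k ∈ K.comap π := by simp [hπι']
  calc (f k : N) = π (P (ι k)) := rfl
    _ = k := by rw [projectionOnto_apply_of_mem_left hq hk, hπι']

theorem iInf_ker_comp_comp_eq_comap (hπι : π ∘ₗ ι = LinearMap.id) (X : Set (Module.End R N)) :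
    ⨅ g ∈ (fun f => ι ∘ₗ f ∘ₗ π) '' X, ker g = (⨅ f ∈ X, ker f).comap π := by
  simp only [iInf_image, comap_iInf, ← comp_assoc, ker_comp,
    ker_comp_of_ker_eq_bot _ (ker_eq_bot_of_inverse hπι)]

theorem IsBaerModule.of_retraction (hπι : π ∘ₗ ι = LinearMap.id) (hM : IsBaerModule R M) :
    IsBaerModule R N := fun X =>
  exists_isCompl_of_exists_isCompl_comap hπι <| iInf_ker_comp_comp_eq_comap hπι X ▸ hM _

theorem IsDualBaerModule.of_retraction (hπι : π ∘ₗ ι = LinearMap.id) (hM : IsDualBaerModule R M) :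
    IsDualBaerModule R N := by
  rw [isDualBaerModule_iff] at hM ⊢
  intro L
  obtain ⟨e, he, he_le, he_fix⟩ := hM (L.map ι)
  have hπι' (n : N) : π (ι n) = n := LinearMap.congr_fun hπι n
  have he' (x : M) : e (e x) = e x := LinearMap.congr_fun he.eq x
  have hιπe (x : M) : ι (π (e x)) = e x := by
    obtain ⟨l, -, hl⟩ := he_le (mem_range_self e x)
    rw [← hl, hπι']
  refine ⟨π ∘ₗ e ∘ₗ ι, ?_, ?_, fun f hf => ?_⟩
  · refine LinearMap.ext fun n => ?_
    simp only [Module.End.mul_apply, comp_apply, hιπe, he']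
  · rintro _ ⟨n, rfl⟩
    obtain ⟨l, hl, hl'⟩ := he_le (mem_range_self e (ι n))
    rw [comp_apply, comp_apply, ← hl', hπι']
    exact hl
  · have hιfπ : range (ι ∘ₗ f ∘ₗ π) ≤ L.map ι := by
      rw [range_comp]
      exact map_mono ((range_comp_le_range π f).trans hf)
    refine LinearMap.ext fun n => ?_
    have hfixed := LinearMap.congr_fun (he_fix _ hιfπ) (ι n)
    simp only [Module.End.mul_apply, comp_apply, hπι'] at hfixed ⊢
    rw [hfixed, hπι']

end Retraction

theorem stmt8 (R : Type u) [Ring R] (M : Type v) [AddCommGroup M] [Module R M]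
    (N : Submodule R M) (hN : ∃ p : Submodule R M, IsCompl N p) :
    (IsBaerModule R M → IsBaerModule R N) ∧
    (IsDualBaerModule R M → IsDualBaerModule R N) := by
  obtain ⟨p, hp⟩ := hN
  have hπι := N.projectionOnto_comp_subtype hp
  exact ⟨IsBaerModule.of_retraction hπι, IsDualBaerModule.of_retraction hπι⟩
end

section
/- Let M = ⊕_{i∈I} M_i with Hom_R(M_i, M_j) = 0 for all i ≠ j. If each M_i is a Baer R-module, then M is a Baer R-module. -/
universe u v w

/-!
If there are no nonzero maps between distinct summands, every endomorphism `f` of `⨁ i, M i` is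
diagonal, `f = ⨁ i, f i` with `f i` its `(i, i)` block. Hence the common kernel of a set `X` of
endomorphisms is `⨁ i, K i`, where `K i` is the common kernel of the blocks `f i`, `f ∈ X`.
Since `M i` is Baer, `M i = K i ⊕ Q i`, and `⨁ i, Q i` complements `⨁ i, K i`: they are the range
and kernel of the idempotent `⨁ i, e i`, where `e i` projects onto `Q i` along `K i`.
-/

namespace DirectSum

section AddCommMonoid

variable {R : Type*} [Semiring R] {ι : Type*} {M : ι → Type*}
  [∀ i, AddCommMonoid (M i)] [∀ i, Module R (M i)]

/-- The submodule `⨁ i, p i` of `⨁ i, M i`. -/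
def piSubmodule (p : ∀ i, Submodule R (M i)) : Submodule R (⨁ i, M i) :=
  (Submodule.pi Set.univ p).comap (coeFnLinearMap R)

@[simp]
theorem mem_piSubmodule {p : ∀ i, Submodule R (M i)} {x : ⨁ i, M i} :
    x ∈ piSubmodule p ↔ ∀ i, x i ∈ p i := by
  simp [piSubmodule]

theorem eq_lmap_of_hom_eq_zero [DecidableEq ι]
    (hhom : ∀ i j, i ≠ j → ∀ f : M i →ₗ[R] M j, f = 0) (f : Module.End R (⨁ i, M i)) :
    f = lmap fun i => component R ι M i ∘ₗ f ∘ₗ lof R ι M i := by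
  refine linearMap_ext R fun i => LinearMap.ext fun x => ext_component R fun j => ?_
  by_cases hij : i = j
  · subst hij
    simp [component.lof_self]
  · have hzero := LinearMap.congr_fun (hhom i j hij (component R ι M j ∘ₗ f ∘ₗ lof R ι M i)) x
    simp only [LinearMap.comp_apply, LinearMap.zero_apply] at hzero
    simp only [LinearMap.comp_apply, lmap_lof, component.of, dif_neg hij, hzero]

theorem iInf_ker_eq_piSubmodule_of_hom_eq_zero [DecidableEq ι]
    (hhom : ∀ i j, i ≠ j → ∀ f : M i →ₗ[R] M j, f = 0) (X : Set (Module.End R (⨁ i, M i))) :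
    ⨅ f ∈ X, LinearMap.ker f =
      piSubmodule fun i => ⨅ f ∈ X, LinearMap.ker (component R ι M i ∘ₗ f ∘ₗ lof R ι M i) := by
  ext x
  have hdiag (f : Module.End R (⨁ i, M i)) :
      f x = 0 ↔ ∀ i, (component R ι M i ∘ₗ f ∘ₗ lof R ι M i) (x i) = 0 := by
    conv_lhs => rw [eq_lmap_of_hom_eq_zero hhom f]
    simp only [DirectSum.ext_iff, lmap_apply, zero_apply]
  simp only [Submodule.mem_iInf, LinearMap.mem_ker, mem_piSubmodule, hdiag]
  exact ⟨fun h i f hf => h f hf i, fun h f hf i => h i f hf⟩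

end AddCommMonoid

variable {R : Type*} [Ring R] {ι : Type*} {M : ι → Type*}
  [∀ i, AddCommGroup (M i)] [∀ i, Module R (M i)]

theorem isCompl_piSubmodule {p q : ∀ i, Submodule R (M i)} (h : ∀ i, IsCompl (p i) (q i)) :
    IsCompl (piSubmodule p) (piSubmodule q) := by
  let e i := (q i).projection (p i) (h i).symm
  have he : IsIdempotentElem (lmap e) := by
    rw [IsIdempotentElem, Module.End.mul_eq_comp, ← lmap_comp]
    exact congrArg lmap (funext fun i => (Submodule.isIdempotentElem_projection _).eq)
  simpa [e, piSubmodule, range_lmap, ker_lmap] using (LinearMap.IsIdempotentElem.isCompl he).symm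

end DirectSum

theorem stmt9 (R : Type u) [Ring R] (ι : Type w) [DecidableEq ι]
    (M : ι → Type v) [∀ i, AddCommGroup (M i)] [∀ i, Module R (M i)]
    (hhom : ∀ i j, i ≠ j → ∀ f : M i →ₗ[R] M j, f = 0)
    (hbaer : ∀ i, IsBaerModule R (M i)) :
    IsBaerModule R (DirectSum ι M) := by
  intro X
  choose q hq using fun i =>
    hbaer i ((fun f => DirectSum.component R ι M i ∘ₗ f ∘ₗ DirectSum.lof R ι M i) '' X)
  simp only [iInf_image] at hq
  rw [DirectSum.iInf_ker_eq_piSubmodule_of_hom_eq_zero hhom]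
  exact ⟨_, DirectSum.isCompl_piSubmodule hq⟩
end

section
/- Let M = ⊕_{i∈I} M_i with Hom_R(M_i, M_j) = 0 for i ≠ j, and suppose M = N ⊕ L. Then N = ⊕_{i∈I} (N ∩ M_i). -/
/-!
Each `Mᵢ` is fully invariant: for an endomorphism `f` and `j ≠ i`, the `j`-th component of `f`
restricted to `Mᵢ` is a map `Mᵢ → Mⱼ`, hence zero. So the projection of `M` onto `N` along `L`
maps each `Mᵢ` into `N ⊓ Mᵢ`; since it fixes `N` and the `Mᵢ` span `M`, `N` lies in
`⨆ i, N ⊓ Mᵢ`.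
-/

universe u v w

namespace DirectSum.IsInternal

variable {R M ι : Type*} [Ring R] [AddCommGroup M] [Module R M] [DecidableEq ι]
  {A : ι → Submodule R M}

theorem mem_of_forall_ne_component_eq_zero (h : IsInternal A) {i : ι} {x : M}
    (hx : ∀ j ≠ i, (LinearEquiv.ofBijective (coeLinearMap A) h).symm x j = 0) : x ∈ A i := by
  set e := LinearEquiv.ofBijective (coeLinearMap A) h
  have hsingle : e.symm x = of (fun i ↦ A i) i (e.symm x i) := by
    refine DFinsupp.ext fun j ↦ ?_
    rcases eq_or_ne j i with rfl | hj
    · rw [of_eq_same]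
    · rw [of_eq_of_ne _ _ _ hj, hx j hj]
  have hx' : x = e (of (fun i ↦ A i) i (e.symm x i)) := by rw [← hsingle, e.apply_symm_apply]
  rw [hx']
  exact (coeLinearMap_of A i (e.symm x i)).symm ▸ (e.symm x i).2

theorem isFullyInvariant_of_forall_ne_linearMap_eq_zero (h : IsInternal A)
    (hhom : ∀ i j, i ≠ j → ∀ f : A i →ₗ[R] A j, f = 0) (i : ι) : (A i).IsFullyInvariant := by
  intro f x hx
  refine h.mem_of_forall_ne_component_eq_zero fun j hj ↦ ?_
  let g : A i →ₗ[R] A j := component R ι (fun i ↦ A i) j ∘ₗ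
    (LinearEquiv.ofBijective (coeLinearMap A) h).symm.toLinearMap ∘ₗ f ∘ₗ (A i).subtype
  simpa [g, ← apply_eq_component] using LinearMap.congr_fun (hhom i j hj.symm g) ⟨x, hx⟩

end DirectSum.IsInternal

theorem Submodule.eq_iSup_inf_of_isCompl {R M ι : Type*} [Ring R] [AddCommGroup M] [Module R M]
    {A : ι → Submodule R M} (htop : iSup A = ⊤) (hinv : ∀ i, (A i).IsFullyInvariant)
    {N L : Submodule R M} (h : IsCompl N L) : N = ⨆ i, N ⊓ A i := by
  refine le_antisymm (fun n hn ↦ ?_) (iSup_le fun i ↦ inf_le_left)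
  let p := N.projection L h
  have hp : ∀ x, p x ∈ ⨆ i, N ⊓ A i := fun x ↦
    iSup_induction A (motive := fun x ↦ p x ∈ ⨆ i, N ⊓ A i) (htop ▸ mem_top)
      (fun i x hx ↦ mem_iSup_of_mem i ⟨projection_apply_mem h x, hinv i p hx⟩)
      (by simp) (fun x y hx hy ↦ map_add p x y ▸ add_mem hx hy)
  have hpn : p n = n := projection_apply_left h ⟨n, hn⟩
  exact hpn ▸ hp n

theorem stmt11 (R : Type u) [Ring R] (M : Type v) [AddCommGroup M] [Module R M]
    (ι : Type w) [DecidableEq ι] (Mi : ι → Submodule R M)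
    (hint : DirectSum.IsInternal Mi)
    (hhom : ∀ i j, i ≠ j → ∀ f : ↥(Mi i) →ₗ[R] ↥(Mi j), f = 0)
    (N L : Submodule R M) (h : IsCompl N L) :
    N = ⨆ i, N ⊓ Mi i :=
  Submodule.eq_iSup_inf_of_isCompl hint.submodule_iSup_eq_top
    (hint.isFullyInvariant_of_forall_ne_linearMap_eq_zero hhom) h
end

section
/- An R-module M is semisimple if and only if M is co-retractable and Baer. -/
universe u v

/-- `M` is co-retractable: there is a nonzero homomorphism `M/N → M`
for every proper submodule `N < M`. -/
def Coretractable (R : Type u) [Ring R] (M : Type v) [AddCommGroup M]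
    [Module R M] : Prop :=
  ∀ N : Submodule R M, N ≠ ⊤ → ∃ f : (M ⧸ N) →ₗ[R] M, f ≠ 0

/-!
For the converse, given a submodule `N`, let `K` be the common kernel of all endomorphisms
vanishing on `N`, so `N ≤ K`, and let `p` be a complement of `K` given by the Baer property.
An endomorphism vanishing on `N ⊔ p` vanishes on `K` and on `p`, hence is zero; by
co-retractability `N ⊔ p = ⊤`, so `p` is also a complement of `N`.
-/

variable {R : Type u} [Ring R] {M : Type v} [AddCommGroup M] [Module R M]

theorem IsSemisimpleModule.coretractable [IsSemisimpleModule R M] : Coretractable R M := by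
  intro N hN
  obtain ⟨p, hp⟩ := exists_isCompl N
  have : Nontrivial (M ⧸ N) := Submodule.Quotient.nontrivial_iff.mpr hN
  exact ⟨p.subtype ∘ₗ (N.quotientEquivOfIsCompl p hp).toLinearMap,
    LinearMap.ne_zero_of_injective <|
      p.injective_subtype.comp (N.quotientEquivOfIsCompl p hp).injective⟩

theorem IsSemisimpleModule.isBaerModule [IsSemisimpleModule R M] : IsBaerModule R M :=
  fun _ => exists_isCompl _

theorem Coretractable.eq_top_of_forall_end_eq_zero (hM : Coretractable R M) {P : Submodule R M}
    (hP : ∀ f : Module.End R M, P ≤ LinearMap.ker f → f = 0) : P = ⊤ := by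
  by_contra hPtop
  obtain ⟨g, hg⟩ := hM P hPtop
  have hgP : g ∘ₗ P.mkQ = 0 := hP _ fun x hx => by
    simp [(Submodule.Quotient.mk_eq_zero P).mpr hx]
  exact hg (Submodule.linearMap_qext P (by rw [hgP, LinearMap.zero_comp]))

theorem Coretractable.isSemisimpleModule_of_isBaerModule (hM : Coretractable R M)
    (hB : IsBaerModule R M) : IsSemisimpleModule R M := by
  refine (isSemisimpleModule_iff R M).mpr ⟨fun N => ?_⟩
  obtain ⟨p, hKp⟩ := hB {f | N ≤ LinearMap.ker f}
  have hNK : N ≤ ⨅ f ∈ {f : Module.End R M | N ≤ LinearMap.ker f}, LinearMap.ker f :=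
    le_iInf₂ fun _ hf => hf
  have hNp : N ⊔ p = ⊤ := hM.eq_top_of_forall_end_eq_zero fun f hf => by
    have hfK := biInf_le (fun f : Module.End R M => LinearMap.ker f)
      (show f ∈ {f | N ≤ LinearMap.ker f} from le_sup_left.trans hf)
    refine LinearMap.ker_eq_top.mp (top_le_iff.mp ?_)
    rw [← hKp.sup_eq_top]
    exact sup_le hfK (le_sup_right.trans hf)
  exact ⟨p, hKp.disjoint.mono_left hNK, codisjoint_iff.mpr hNp⟩

theorem stmt17 (R : Type u) [Ring R] (M : Type v) [AddCommGroup M] [Module R M] :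
    IsSemisimpleModule R M ↔ Coretractable R M ∧ IsBaerModule R M :=
  ⟨fun _ => ⟨IsSemisimpleModule.coretractable, IsSemisimpleModule.isBaerModule⟩,
    fun ⟨hM, hB⟩ => hM.isSemisimpleModule_of_isBaerModule hB⟩
end

section
/- Let M = M_1 ⊕ M_2 be a Baer R-module where M_1 and M_2 are prime modules (each is cogenerated by every nonzero submodule of itself) and Hom_R(M_1, M_2) = 0. Then Hom_R(M_2, M_1) = 0 and M_1, M_2 are orthogonal (contain no nonzero isomorphic submodules). -/
universe u v

/-- `P` is a prime module: `P` is cogenerated by each of its nonzero submodules,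
i.e. `P` embeds in a direct product of copies of `N` for every nonzero `N ≤ P`. -/
def IsPrimeModule (R : Type u) [Ring R] (P : Type v) [AddCommGroup P]
    [Module R P] : Prop :=
  ∀ N : Submodule R P, N ≠ ⊥ →
    ∃ (ι : Type v) (f : P →ₗ[R] (ι → ↥N)), Function.Injective f

theorem stmt18 (R : Type u) [Ring R]
    (M₁ M₂ : Type v) [AddCommGroup M₁] [Module R M₁] [AddCommGroup M₂] [Module R M₂]
    (hbaer : IsBaerModule R (M₁ × M₂))
    (h₁ : IsPrimeModule R M₁) (h₂ : IsPrimeModule R M₂)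
    (h12 : ∀ f : M₁ →ₗ[R] M₂, f = 0) :
    (∀ f : M₂ →ₗ[R] M₁, f = 0) ∧
      ∀ (N₁ : Submodule R M₁) (N₂ : Submodule R M₂),
        Nonempty (↥N₁ ≃ₗ[R] ↥N₂) → N₁ = ⊥ ∧ N₂ = ⊥ := by

  -- Orthogonality first: uses only primeness of M₁ and h12.
  have orth : ∀ (N₁ : Submodule R M₁) (N₂ : Submodule R M₂),
      Nonempty (↥N₁ ≃ₗ[R] ↥N₂) → N₁ = ⊥ ∧ N₂ = ⊥ := by
    rintro N₁ N₂ ⟨e⟩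
    have hN₁ : N₁ = ⊥ := by
      by_contra hN₁
      obtain ⟨ι, f, hf⟩ := h₁ N₁ hN₁
      have hall : ∀ x : M₁, x = 0 := by
        intro x
        have hfx : f x = 0 := by
          funext i
          have hc : (N₂.subtype.comp ((e : ↥N₁ →ₗ[R] ↥N₂).comp
              ((LinearMap.proj i).comp f))) = 0 := h12 _
          have hx := congrFun (congrArg DFunLike.coe hc) x
          simp only [LinearMap.comp_apply, LinearMap.zero_apply, LinearMap.proj_apply,
            Submodule.coe_subtype, LinearEquiv.coe_coe] at hx
          have : e (f x i) = 0 := Subtype.ext hx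
          exact e.injective (by simpa using this)
        have : f x = f 0 := by simpa using hfx
        exact hf this
      apply hN₁
      rw [eq_bot_iff]
      intro y _
      exact hall y
    refine ⟨hN₁, ?_⟩
    rw [eq_bot_iff]
    intro y hy
    have : (⟨y, hy⟩ : ↥N₂) = e (e.symm ⟨y, hy⟩) := (e.apply_symm_apply _).symm
    have h0 : e.symm (⟨y, hy⟩ : ↥N₂) = 0 :=
      Subtype.ext ((Submodule.eq_bot_iff _).mp hN₁ _ (e.symm (⟨y, hy⟩ : ↥N₂)).2)
    rw [h0, map_zero] at this
    simpa using congrArg Subtype.val this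
  refine ⟨?_, orth⟩
  intro g
  set φ : Module.End R (M₁ × M₂) :=
    (LinearMap.inl R M₁ M₂).comp (g.comp (LinearMap.snd R M₁ M₂)) with hφ
  obtain ⟨p, hp⟩ := hbaer {φ}
  have hker : (⨅ f ∈ ({φ} : Set (Module.End R (M₁ × M₂))), LinearMap.ker f)
      = LinearMap.ker φ := by simp
  rw [hker] at hp
  set ψ : ↥p →ₗ[R] M₁ := g.comp ((LinearMap.snd R M₁ M₂).comp p.subtype) with hψdef
  set π : ↥p →ₗ[R] M₂ := (LinearMap.snd R M₁ M₂).comp p.subtype with hπdef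
  have hψ : Function.Injective ψ := by
    rw [← LinearMap.ker_eq_bot, eq_bot_iff]
    rintro ⟨x, hx⟩ hk
    have hk' : g x.2 = 0 := hk
    have hxker : x ∈ LinearMap.ker φ := by
      simp [hφ, LinearMap.mem_ker, Prod.ext_iff, hk']
    have := (Submodule.disjoint_def.mp hp.disjoint) x hxker hx
    exact Subtype.ext this
  have hπ : Function.Injective π := by
    intro a b hab
    apply hψ
    exact congrArg g hab
  have e : (LinearMap.range ψ) ≃ₗ[R] (LinearMap.range π) :=
    (LinearEquiv.ofInjective ψ hψ).symm.trans (LinearEquiv.ofInjective π hπ)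
  obtain ⟨hr1, hr2⟩ := orth _ _ ⟨e⟩
  have hpbot : p = ⊥ := by
    rw [eq_bot_iff]
    intro x hx
    have : ψ ⟨x, hx⟩ ∈ LinearMap.range ψ := ⟨⟨x, hx⟩, rfl⟩
    rw [hr1] at this
    have h0 : ψ ⟨x, hx⟩ = 0 := this
    have := hψ (by simpa using h0 : ψ ⟨x, hx⟩ = ψ 0)
    simpa using congrArg Subtype.val this
  have htop : LinearMap.ker φ = ⊤ := by
    have := hp.sup_eq_top
    rwa [hpbot, sup_bot_eq] at this
  have hφ0 : φ = 0 := LinearMap.ker_eq_top.mp htop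
  ext m₂
  have := congrFun (congrArg DFunLike.coe hφ0) (0, m₂)
  simp only [hφ, LinearMap.comp_apply, LinearMap.snd_apply, LinearMap.inl_apply,
    LinearMap.zero_apply, Prod.ext_iff] at this
  simpa using this.1
end
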